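/- arXiv:1212.5309 — 2 statements merged into one kernel-verified Lean document; each statement's English description precedes it below -/
import Mathlib

section
/- For the stochastic tandem queueing system with infinite buffers, suppose the sequences {τ_{i,n} : n = 1, 2, …}, i = 0, 1, …, M, are mutually independent sequences of independent and identically distributed nonnegative random variables with 0 ≤ E[τ_{i,1}] < ∞ and Var[τ_{i,1}] < ∞, and suppose at least one of the expectations E[τ_{i,1}], i = 0, 1, …, M, is positive. Then with probability one, lim_{n→∞} n/D_M(n) = (max_{0 ≤ i ≤ M} E[τ_{i,1}])^{−1}. -/
open MeasureTheory ProbabilityTheory Finset Filter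

/-- Departure epochs of the tandem queueing system with infinite buffers. -/
noncomputable def depart (τ : ℕ → ℕ → ℝ) : ℕ → ℕ → ℝ
  | 0, 0 => 0
  | 0, n + 1 => depart τ 0 n + τ 0 (n + 1)
  | _ + 1, 0 => 0
  | m + 1, n + 1 =>
      max (depart τ m (n + 1)) (depart τ (m + 1) n) + τ (m + 1) (n + 1)
  termination_by m n => (m, n)

/-!
Pathwise, `D_{m+1}(n)` is squeezed between `max (D_m(n), S_{m+1}(n))` and
`D_m(k) + (S_{m+1}(n) - S_{m+1}(k-1))` for some `1 ≤ k ≤ n`, where `S_i` are the partial sums of the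
`i`-th row of service times. Hence if `D_m(n)/n → L` and `S_{m+1}(n)/n → λ` then
`D_{m+1}(n)/n → max L λ`, and by induction `D_M(n)/n → max_i λ_i` whenever every row average
converges to `λ_i`. The strong law of large numbers gives this convergence almost surely with
`λ_i = E[τ_{i,1}]`.
-/

section Asymptotics

lemma exists_le_mul_add_of_tendsto_div {f : ℕ → ℝ} {L δ : ℝ}
    (hf : Tendsto (fun n : ℕ => f n / n) atTop (nhds L)) (hδ : 0 < δ) :
    ∃ C, ∀ n : ℕ, f n ≤ (L + δ) * n + C := by
  have hev : ∀ᶠ n : ℕ in atTop, f n - (L + δ) * n ≤ 0 := by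
    filter_upwards [hf.eventually_lt_const (lt_add_of_pos_right L hδ), eventually_gt_atTop 0]
      with n hlt hn
    rw [div_lt_iff₀ (by exact_mod_cast hn)] at hlt
    linarith
  obtain ⟨C, hC⟩ := (isBoundedUnder_of_eventually_le hev).bddAbove_range
  exact ⟨C, fun n => by linarith [hC ⟨n, rfl⟩]⟩

lemma eventually_div_lt_of_le_mul_add {f : ℕ → ℝ} {x c C : ℝ} (hxc : x < c)
    (hf : ∀ᶠ n : ℕ in atTop, f n ≤ x * n + C) : ∀ᶠ n : ℕ in atTop, f n / n < c := by
  have hlim : Tendsto (fun n : ℕ => x + C / n) atTop (nhds x) := by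
    simpa using tendsto_const_nhds.add (tendsto_const_div_atTop_nhds_zero_nat C)
  filter_upwards [hlim.eventually_lt_const hxc, hf, eventually_gt_atTop 0] with n hlt hle hn
  have hn' : (0 : ℝ) < n := by exact_mod_cast hn
  calc f n / n ≤ (x * n + C) / n := div_le_div_of_nonneg_right hle hn'.le
    _ = x + C / n := by field_simp
    _ < c := hlt

/-- The asymptotic step of the induction over the stations: `a` plays `D_m`, `S` the partial sums
of the service times at station `m + 1`, and `b` plays `D_{m+1}`. -/
theorem tendsto_div_max_of_le_of_le_add_sub {a S b : ℕ → ℝ} {L l : ℝ}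
    (ha : Tendsto (fun n : ℕ => a n / n) atTop (nhds L))
    (hS : Tendsto (fun n : ℕ => S n / n) atTop (nhds l))
    (ha_le : ∀ n, a n ≤ b n) (hS_le : ∀ n, S n ≤ b n)
    (hb_le : ∀ n, ∃ k ≤ n, b (n + 1) ≤ a (k + 1) + (S (n + 1) - S k)) :
    Tendsto (fun n : ℕ => b n / n) atTop (nhds (max L l)) := by
  rw [tendsto_order]
  constructor
  · intro c hc
    filter_upwards [(ha.max hS).eventually_const_lt hc] with n hn
    exact hn.trans_le <| max_le (div_le_div_of_nonneg_right (ha_le n) n.cast_nonneg)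
      (div_le_div_of_nonneg_right (hS_le n) n.cast_nonneg)
  · intro c hc
    obtain ⟨δ, hδ, hδc⟩ : ∃ δ, 0 < δ ∧ max L l + 3 * δ < c :=
      ⟨(c - max L l) / 4, by linarith, by linarith⟩
    obtain ⟨C₁, ha_lin⟩ := exists_le_mul_add_of_tendsto_div ha hδ
    obtain ⟨C₂, hS_lin⟩ := exists_le_mul_add_of_tendsto_div hS hδ
    obtain ⟨C₃, hS_lin'⟩ := exists_le_mul_add_of_tendsto_div (f := fun n => -S n)
      (by simpa only [neg_div] using hS.neg) hδ
    refine eventually_div_lt_of_le_mul_add (x := max L l + 3 * δ)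
      (C := max L l + C₁ + C₂ + C₃) hδc (eventually_atTop.2 ⟨1, fun n hn => ?_⟩)
    obtain ⟨n, rfl⟩ := Nat.exists_eq_add_of_le' hn
    obtain ⟨k, hkn, hb⟩ := hb_le n
    have hk : (k : ℝ) ≤ n := by exact_mod_cast hkn
    have hL : 0 ≤ (max L l - L) * (k + 1) :=
      mul_nonneg (sub_nonneg.2 (le_max_left L l)) (by positivity)
    have hl : 0 ≤ (max L l - l) * (n + 1 - k) :=
      mul_nonneg (sub_nonneg.2 (le_max_right L l)) (by linarith)
    have hδk : 0 ≤ δ * (n - k) := mul_nonneg hδ.le (by linarith)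
    have h₁ := ha_lin (k + 1)
    have h₂ := hS_lin (n + 1)
    have h₃ := hS_lin' k
    push_cast at h₁ h₂ h₃ ⊢
    linarith

end Asymptotics

section Tandem

variable (τ : ℕ → ℕ → ℝ)

lemma depart_zero_right (m : ℕ) : depart τ m 0 = 0 := by
  cases m <;> rw [depart]

lemma depart_zero_left (n : ℕ) : depart τ 0 n = ∑ k ∈ range n, τ 0 (k + 1) := by
  induction n with
  | zero => rw [depart_zero_right, sum_range_zero]
  | succ n ih => rw [depart, ih, sum_range_succ]

lemma sum_le_depart (m n : ℕ) : ∑ k ∈ range n, τ m (k + 1) ≤ depart τ m n := by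
  induction n with
  | zero => simp [depart_zero_right]
  | succ n ih =>
    cases m with
    | zero => exact (depart_zero_left τ (n + 1)).ge
    | succ m =>
      rw [depart, sum_range_succ]
      exact add_le_add_left (ih.trans (le_max_right _ _)) _

variable {τ}

lemma depart_nonneg {m : ℕ} (hτ : ∀ i ≤ m, ∀ n, 0 ≤ τ i (n + 1)) (n : ℕ) :
    0 ≤ depart τ m n := by
  induction m generalizing n with
  | zero =>
    rw [depart_zero_left]
    exact sum_nonneg fun k _ => hτ 0 le_rfl k
  | succ m ihm =>
    cases n with
    | zero => rw [depart_zero_right]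
    | succ n =>
      rw [depart]
      exact add_nonneg ((ihm (fun i hi => hτ i (hi.trans m.le_succ)) _).trans (le_max_left _ _))
        (hτ _ le_rfl n)

lemma depart_le_depart_succ {m : ℕ} (hτ : ∀ n, 0 ≤ τ (m + 1) (n + 1)) (n : ℕ) :
    depart τ m n ≤ depart τ (m + 1) n := by
  cases n with
  | zero => rw [depart_zero_right, depart_zero_right]
  | succ n =>
    conv_rhs => rw [depart]
    exact (le_max_left _ _).trans (le_add_of_nonneg_right (hτ n))

/-- Unrolling the recursion in `n`: the customer that last found station `m + 1` idle among the
first `n + 1` is the `(k + 1)`-st. -/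
lemma exists_depart_succ_le {m : ℕ} (hτ : ∀ i ≤ m, ∀ n, 0 ≤ τ i (n + 1)) (n : ℕ) :
    ∃ k ≤ n, depart τ (m + 1) (n + 1) ≤ depart τ m (k + 1) +
      (∑ j ∈ range (n + 1), τ (m + 1) (j + 1) - ∑ j ∈ range k, τ (m + 1) (j + 1)) := by
  induction n with
  | zero =>
    refine ⟨0, le_rfl, ?_⟩
    rw [depart, depart_zero_right, max_eq_left (depart_nonneg hτ 1)]
    simp
  | succ n ih =>
    obtain ⟨k, hkn, hk⟩ := ih
    rw [depart, sum_range_succ]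
    rcases max_cases (depart τ m (n + 2)) (depart τ (m + 1) (n + 1)) with ⟨hmax, _⟩ | ⟨hmax, _⟩
    · exact ⟨n + 1, le_rfl, by rw [hmax]; linarith⟩
    · exact ⟨k, hkn.trans n.le_succ, by rw [hmax]; linarith⟩

theorem tendsto_depart_div {l : ℕ → ℝ} (M : ℕ) (hτ : ∀ i ≤ M, ∀ n, 0 ≤ τ i (n + 1))
    (hS : ∀ i ≤ M, Tendsto (fun n : ℕ => (∑ k ∈ range n, τ i (k + 1)) / n) atTop (nhds (l i))) :
    Tendsto (fun n : ℕ => depart τ M n / n) atTop (nhds (partialSups l M)) := by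
  induction M with
  | zero =>
    simpa only [depart_zero_left, partialSups_zero] using hS 0 le_rfl
  | succ M ih =>
    have hτM : ∀ i ≤ M, ∀ n, 0 ≤ τ i (n + 1) := fun i hi => hτ i (hi.trans M.le_succ)
    rw [← Order.succ_eq_add_one, partialSups_succ, Order.succ_eq_add_one]
    exact tendsto_div_max_of_le_of_le_add_sub
      (ih hτM fun i hi => hS i (hi.trans M.le_succ)) (hS (M + 1) le_rfl)
      (depart_le_depart_succ (hτ _ le_rfl)) (sum_le_depart τ _) (exists_depart_succ_le hτM)

end Tandem

lemma ae_tendsto_row_average_of_iIndepFun {Ω ι : Type*} [MeasurableSpace Ω] {μ : Measure Ω}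
    {X : ι × ℕ → Ω → ℝ} (hindep : iIndepFun X μ) (i : ι) (hint : Integrable (X (i, 0)) μ)
    (hident : ∀ n, IdentDistrib (X (i, n)) (X (i, 0)) μ μ) :
    ∀ᵐ ω ∂μ, Tendsto (fun n : ℕ => (∑ k ∈ range n, X (i, k) ω) / n) atTop
      (nhds (∫ ω, X (i, 0) ω ∂μ)) :=
  strong_law_ae_real (fun n => X (i, n)) hint
    (fun _ _ hjk => hindep.indepFun fun h => hjk (congrArg Prod.snd h)) hident

theorem throughput_eq_inv_max_general
    {Ω : Type*} [MeasurableSpace Ω] (μ : Measure Ω) [IsProbabilityMeasure μ]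
    (M : ℕ) (τ : ℕ → ℕ → Ω → ℝ)
    (hpos : ∀ i ≤ M, ∀ n, 1 ≤ n → ∀ ω, 0 ≤ τ i n ω)
    (hindep : iIndepFun
        (fun p : Fin (M + 1) × ℕ => τ (p.1 : ℕ) (p.2 + 1)) μ)
    (hident : ∀ i ≤ M, ∀ n, 1 ≤ n → IdentDistrib (τ i n) (τ i 1) μ μ)
    (hint : ∀ i ≤ M, Integrable (τ i 1) μ)
    (hposmean : ∃ i ≤ M, 0 < ∫ ω, τ i 1 ω ∂μ) :
    ∀ᵐ ω ∂μ, Tendsto (fun n : ℕ => (n : ℝ) / depart (fun i j => τ i j ω) M n)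
      atTop
      (nhds ((Finset.range (M + 1)).sup'
          (Finset.nonempty_range_iff.mpr (Nat.succ_ne_zero M))
          fun i => ∫ ω, τ i 1 ω ∂μ)⁻¹) := by
  have hrows : ∀ᵐ ω ∂μ, ∀ i ∈ Set.Iic M, Tendsto
      (fun n : ℕ => (∑ k ∈ range n, τ i (k + 1) ω) / n) atTop (nhds (∫ ω, τ i 1 ω ∂μ)) :=
    (Set.finite_Iic M).eventually_all.2 fun i hi =>
      ae_tendsto_row_average_of_iIndepFun hindep ⟨i, Nat.lt_succ_of_le hi⟩ (hint i hi)
        fun n => hident i hi (n + 1) n.succ_pos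
  obtain ⟨i₀, hi₀, hmean⟩ := hposmean
  have hmax_pos : 0 < partialSups (fun i => ∫ ω, τ i 1 ω ∂μ) M :=
    hmean.trans_le (le_partialSups_of_le (fun i => ∫ ω, τ i 1 ω ∂μ) hi₀)
  filter_upwards [hrows] with ω hω
  rw [← partialSups_eq_sup'_range]
  simpa only [inv_div] using (tendsto_depart_div (τ := fun i j => τ i j ω) M
    (fun i hi n => hpos i hi (n + 1) n.succ_pos ω) hω).inv₀ hmax_pos.ne'

/-- **Throughput of the tandem system.** If the interarrival and service times
`τ i n` form mutually independent sequences of i.i.d. nonnegative random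
variables with finite means and finite variances, and at least one of the
means `E[τ i 1]`, `0 ≤ i ≤ M`, is positive, then with probability one
`n / D_M(n) → (max_{0 ≤ i ≤ M} E[τ i 1])⁻¹`. -/
theorem throughput_eq_inv_max
    {Ω : Type*} [MeasurableSpace Ω] (μ : Measure Ω) [IsProbabilityMeasure μ]
    (M : ℕ) (τ : ℕ → ℕ → Ω → ℝ)
    (hpos : ∀ i ≤ M, ∀ n, 1 ≤ n → ∀ ω, 0 ≤ τ i n ω)
    (hmeas : ∀ i ≤ M, ∀ n, Measurable (τ i n))
    (hindep : iIndepFun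
        (fun p : Fin (M + 1) × ℕ => τ (p.1 : ℕ) (p.2 + 1)) μ)
    (hident : ∀ i ≤ M, ∀ n, 1 ≤ n → IdentDistrib (τ i n) (τ i 1) μ μ)
    (hint : ∀ i ≤ M, Integrable (τ i 1) μ)
    (hvar : ∀ i ≤ M, MemLp (τ i 1) 2 μ)
    (hposmean : ∃ i ≤ M, 0 < ∫ ω, τ i 1 ω ∂μ) :
    ∀ᵐ ω ∂μ, Tendsto (fun n : ℕ => (n : ℝ) / depart (fun i j => τ i j ω) M n)
      atTop
      (nhds ((Finset.range (M + 1)).sup'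
          (Finset.nonempty_range_iff.mpr (Nat.succ_ne_zero M))
          fun i => ∫ ω, τ i 1 ω ∂μ)⁻¹) :=
  throughput_eq_inv_max_general μ M τ hpos hindep hident hint hposmean
end

section
/- For the two-queue tandem system with manufacturing blocking and intermediate buffer of capacity 0, define L(n) = max_{1 ≤ k ≤ n} { Σ_{j=1}^{k} τ_{0,j} + Σ_{j=k}^{n} max(τ_{1,j+1}, τ_{2,j}) } and U(n) = max_{1 ≤ k ≤ n} { Σ_{j=1}^{k} τ_{0,j} + Σ_{j=k}^{n} max(τ_{1,j}, τ_{2,j−1}) }, with the convention τ_{2,0} = 0. Then for every n ≥ 1, L(n) − max(τ_{1,n+1}, τ_{2,n}) ≤ D_1(n) ≤ U(n). -/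
/-!
Because the second buffer has capacity 0, the second server finishes job `n` exactly `τ 2 n`
after the first one releases it, so `D_2(n) = D_1(n) + τ 2 n` and `D_1` alone satisfies the
max-plus recursion `D_1(n+1) = max (A(n+1) + τ 1 (n+1)) (D_1(n) + max (τ 1 (n+1)) (τ 2 n))`,
with `A` the arrival epochs. Telescoping the second argument of the outer `max`, starting
from `D_1(k) ≥ A(k)`, gives the lower bound; enlarging `τ 1 (n+1)` to
`max (τ 1 (n+1)) (τ 2 n)` gives a Lindley-type recursion whose unfolding is the upper bound.
-/

open Finset

/-- Arrival epochs: `arr τ n = arr τ (n-1) + τ 0 n`, `arr τ 0 = 0`. -/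
noncomputable def arr (τ : ℕ → ℕ → ℝ) : ℕ → ℝ
  | 0 => 0
  | n + 1 => arr τ n + τ 0 (n + 1)

/-- Departure epochs `(D_1(n), D_2(n))` of the two-queue tandem system with
manufacturing blocking and intermediate buffer of capacity 0. -/
noncomputable def mb (τ : ℕ → ℕ → ℝ) : ℕ → ℝ × ℝ
  | 0 => (0, 0)
  | n + 1 =>
      let p := mb τ n
      let d1 := max (max (arr τ (n + 1)) p.1 + τ 1 (n + 1)) p.2
      (d1, max d1 p.2 + τ 2 (n + 1))

section MaxPlus

variable {α : Type*} [AddCommMonoid α]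

theorem add_sum_Ico_le_of_add_le_succ [PartialOrder α] [IsOrderedAddMonoid α] {x c : ℕ → α}
    (hstep : ∀ n, x n + c n ≤ x (n + 1)) {k n : ℕ} (hkn : k ≤ n) :
    x k + ∑ j ∈ Ico k n, c j ≤ x n := by
  induction n, hkn using Nat.le_induction with
  | base => simp
  | succ n hkn ih =>
    calc x k + ∑ j ∈ Ico k (n + 1), c j = x k + ∑ j ∈ Ico k n, c j + c n := by
          rw [sum_Ico_succ_top hkn, add_assoc]
      _ ≤ x n + c n := by gcongr
      _ ≤ x (n + 1) := hstep n

theorem exists_le_add_sum_Icc_of_le_max_add [LinearOrder α] [IsOrderedAddMonoid α]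
    {x a c : ℕ → α} (h0 : x 0 ≤ a 1)
    (hstep : ∀ n, x (n + 1) ≤ max (a (n + 1)) (x n) + c (n + 1)) {n : ℕ} (hn : 1 ≤ n) :
    ∃ k ∈ Icc 1 n, x n ≤ a k + ∑ j ∈ Icc k n, c j := by
  induction n, hn using Nat.le_induction with
  | base => exact ⟨1, by simp, by simpa [max_eq_left h0] using hstep 0⟩
  | succ n _ ih =>
    rcases le_total (x n) (a (n + 1)) with hxa | hax
    · exact ⟨n + 1, by simp, by simpa [max_eq_left hxa] using hstep n⟩
    · obtain ⟨k, hk, hxk⟩ := ih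
      have hkn : k ≤ n + 1 := (mem_Icc.mp hk).2.trans n.le_succ
      refine ⟨k, mem_Icc.mpr ⟨(mem_Icc.mp hk).1, hkn⟩, ?_⟩
      calc x (n + 1) ≤ x n + c (n + 1) := by simpa [max_eq_right hax] using hstep n
        _ ≤ a k + ∑ j ∈ Icc k n, c j + c (n + 1) := by gcongr
        _ = a k + ∑ j ∈ Icc k (n + 1), c j := by
          rw [sum_Icc_succ_top hkn, add_assoc]

end MaxPlus

section TandemQueue

variable (τ : ℕ → ℕ → ℝ)

theorem arr_eq_sum (n : ℕ) : arr τ n = ∑ j ∈ Icc 1 n, τ 0 j := by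
  induction n with
  | zero => simp [arr]
  | succ n ih => rw [arr, ih, sum_Icc_succ_top (Nat.le_add_left 1 n)]

variable {τ}

theorem mb_snd_eq (hτ20 : τ 2 0 = 0) (n : ℕ) : (mb τ n).2 = (mb τ n).1 + τ 2 n := by
  cases n with
  | zero => simp [mb, hτ20]
  | succ n => simp only [mb, max_eq_left (le_max_right _ _)]

theorem mb_fst_succ (hτ20 : τ 2 0 = 0) (n : ℕ) :
    (mb τ (n + 1)).1 =
      max (arr τ (n + 1) + τ 1 (n + 1)) ((mb τ n).1 + max (τ 1 (n + 1)) (τ 2 n)) := by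
  rw [← max_add_add_left, ← max_assoc, max_add_add_right, ← mb_snd_eq hτ20]
  rfl

theorem add_le_mb_fst_succ (hτ20 : τ 2 0 = 0) (n : ℕ) :
    (mb τ n).1 + max (τ 1 (n + 1)) (τ 2 n) ≤ (mb τ (n + 1)).1 :=
  (mb_fst_succ hτ20 n).symm ▸ le_max_right _ _

theorem arr_le_mb_fst (hτ20 : τ 2 0 = 0) {n : ℕ} (hn : 1 ≤ n) (hτ1 : 0 ≤ τ 1 n) :
    arr τ n ≤ (mb τ n).1 := by
  obtain ⟨n, rfl⟩ := Nat.exists_eq_add_of_le' hn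
  rw [mb_fst_succ hτ20]
  exact le_max_of_le_left (le_add_of_nonneg_right hτ1)

theorem mb_fst_succ_le (hτ20 : τ 2 0 = 0) (n : ℕ) :
    (mb τ (n + 1)).1 ≤ max (arr τ (n + 1)) (mb τ n).1 + max (τ 1 (n + 1)) (τ 2 n) := by
  rw [mb_fst_succ hτ20, ← max_add_add_right]
  exact max_le_max (by gcongr; exact le_max_left _ _) le_rfl

end TandemQueue

/-- With `L(n) = max_{1 ≤ k ≤ n} { ∑_{j=1}^{k} τ 0 j + ∑_{j=k}^{n} max (τ 1 (j+1)) (τ 2 j) }`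
and `U(n) = max_{1 ≤ k ≤ n} { ∑_{j=1}^{k} τ 0 j + ∑_{j=k}^{n} max (τ 1 j) (τ 2 (j-1)) }`
(where `τ 2 0 = 0` by convention), one has, for every `n ≥ 1`,
`L(n) - max (τ 1 (n+1)) (τ 2 n) ≤ D_1(n) ≤ U(n)`. -/
theorem mb_bounds (τ : ℕ → ℕ → ℝ) (hτ : ∀ i n, 0 ≤ τ i n) (hτ20 : τ 2 0 = 0)
    (n : ℕ) (hn : 1 ≤ n) :
    ((Finset.Icc 1 n).sup' (Finset.nonempty_Icc.mpr hn)
          (fun k => (∑ j ∈ Finset.Icc 1 k, τ 0 j)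
            + ∑ j ∈ Finset.Icc k n, max (τ 1 (j + 1)) (τ 2 j)))
        - max (τ 1 (n + 1)) (τ 2 n) ≤ (mb τ n).1
      ∧ (mb τ n).1 ≤
          (Finset.Icc 1 n).sup' (Finset.nonempty_Icc.mpr hn)
            (fun k => (∑ j ∈ Finset.Icc 1 k, τ 0 j)
              + ∑ j ∈ Finset.Icc k n, max (τ 1 j) (τ 2 (j - 1))) := by
  simp only [← arr_eq_sum]
  constructor
  · refine sub_le_iff_le_add.mpr (sup'_le _ _ fun k hk => ?_)
    obtain ⟨hk1, hkn⟩ := mem_Icc.mp hk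
    rw [← Ico_add_one_right_eq_Icc, sum_Ico_succ_top hkn, ← add_assoc]
    gcongr
    exact (add_le_add_left (arr_le_mb_fst hτ20 hk1 (hτ 1 k)) _).trans
      (add_sum_Ico_le_of_add_le_succ (add_le_mb_fst_succ hτ20) hkn)
  · have h0 : (mb τ 0).1 ≤ arr τ 1 := by simpa [mb, arr] using hτ 0 1
    obtain ⟨k, hk, hle⟩ := exists_le_add_sum_Icc_of_le_max_add
      (x := fun n => (mb τ n).1) (a := arr τ) (c := fun j => max (τ 1 j) (τ 2 (j - 1)))
      h0 (mb_fst_succ_le hτ20) hn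
    exact hle.trans (le_sup'_of_le _ hk le_rfl)
end
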